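/- Assume min{α₁, α₂, α₃} ≤ 0. Then the unit sphere S² is NOT a global attractor of the system in ℝ³ ∖ {0}: there exist x₀ ∈ ℝ³ ∖ {0} and a differentiable x : [0,∞) → ℝ³ with x'(t) = b(x(t)) for all t ≥ 0 and x(0) = x₀, such that ‖x(t)‖² does not tend to 1 as t → ∞. -/

import Mathlib

/-!
Each coordinate axis `ℝ eᵢ` is invariant under `b`, and on it the flow reduces to the scalar
equation `u' = αᵢ u (1 - u²)`, which has the explicit solution `u(t) = e^{αᵢ t} / √(3 + e^{2αᵢ t})`
with `u(0) = 1/2`. When `αᵢ ≤ 0` this solution satisfies `u(t)² = 1 / (1 + 3 e^{-2αᵢ t}) ≤ 1/4`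
for `t ≥ 0`, so its squared norm cannot tend to `1`.
-/

open scoped RealInnerProductSpace

/-- The cubic Kolmogorov vector field on `ℝ³` (modelled as `EuclideanSpace ℝ (Fin 3)`):
`b(x)₁ = x₁(α₁ − α₁x₁² − (α₁+α₂+d₁)x₂² + d₂x₃²)`,
`b(x)₂ = x₂(α₂ + d₁x₁² − α₂x₂² − (α₂+α₃+d₃)x₃²)`,
`b(x)₃ = x₃(α₃ − (α₃+α₁+d₂)x₁² + d₃x₂² − α₃x₃²)`. -/
noncomputable def bVF (α₁ α₂ α₃ d₁ d₂ d₃ : ℝ) (x : EuclideanSpace ℝ (Fin 3)) :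
    EuclideanSpace ℝ (Fin 3) :=
  (WithLp.equiv 2 (Fin 3 → ℝ)).symm
    ![x 0 * (α₁ - α₁ * (x 0)^2 - (α₁ + α₂ + d₁) * (x 1)^2 + d₂ * (x 2)^2),
      x 1 * (α₂ + d₁ * (x 0)^2 - α₂ * (x 1)^2 - (α₂ + α₃ + d₃) * (x 2)^2),
      x 2 * (α₃ - (α₃ + α₁ + d₂) * (x 0)^2 + d₃ * (x 1)^2 - α₃ * (x 2)^2)]

open Filter Real

open scoped Topology

noncomputable def cubicLogistic (c t : ℝ) : ℝ := exp (c * t) / √(3 + exp (c * t) ^ 2)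

theorem hasDerivAt_cubicLogistic (c t : ℝ) :
    HasDerivAt (cubicLogistic c)
      (c * cubicLogistic c t * (1 - cubicLogistic c t ^ 2)) t := by
  have hpos : 0 < 3 + exp (c * t) ^ 2 := by positivity
  have hexp : HasDerivAt (fun t => exp (c * t)) (exp (c * t) * c) t := by
    simpa using ((hasDerivAt_id t).const_mul c).exp
  have hsqrt : HasDerivAt (fun t => √(3 + exp (c * t) ^ 2))
      (2 * exp (c * t) ^ 1 * (exp (c * t) * c) / (2 * √(3 + exp (c * t) ^ 2))) t :=
    ((hexp.pow 2).const_add 3).sqrt hpos.ne'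
  have hS0 : √(3 + exp (c * t) ^ 2) ≠ 0 := (sqrt_pos.mpr hpos).ne'
  refine (hexp.div hsqrt hS0).congr_deriv ?_
  unfold cubicLogistic
  field_simp

theorem cubicLogistic_zero (c : ℝ) : cubicLogistic c 0 = 1 / 2 := by
  rw [cubicLogistic, mul_zero, exp_zero, show (3 : ℝ) + 1 ^ 2 = 2 ^ 2 by norm_num,
    sqrt_sq zero_le_two]

theorem cubicLogistic_sq_le_of_nonpos {c t : ℝ} (hc : c ≤ 0) (ht : 0 ≤ t) :
    cubicLogistic c t ^ 2 ≤ 1 / 4 := by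
  have hle : exp (c * t) ≤ 1 := exp_le_one_iff.mpr (mul_nonpos_of_nonpos_of_nonneg hc ht)
  have hpos : 0 < 3 + exp (c * t) ^ 2 := by positivity
  rw [cubicLogistic, div_pow, sq_sqrt hpos.le, div_le_div_iff₀ hpos four_pos]
  nlinarith [exp_pos (c * t)]

theorem exists_solution_not_tendsto_sq_norm_one {E : Type*} [NormedAddCommGroup E]
    [NormedSpace ℝ E] (F : E → E) {c : ℝ} (hc : c ≤ 0) {e : E} (he : ‖e‖ = 1)
    (hF : ∀ u : ℝ, F (u • e) = (c * u * (1 - u ^ 2)) • e) :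
    ∃ x : ℝ → E, x 0 ≠ 0 ∧ (∀ t : ℝ, 0 ≤ t → HasDerivAt x (F (x t)) t) ∧
      ¬ Tendsto (fun t => ‖x t‖ ^ 2) atTop (𝓝 1) := by
  have hnorm : ∀ t, ‖cubicLogistic c t • e‖ ^ 2 = cubicLogistic c t ^ 2 := fun t => by
    rw [norm_smul, he, mul_one, norm_eq_abs, sq_abs]
  refine ⟨fun t => cubicLogistic c t • e, ?_, fun t _ => ?_, fun hlim => ?_⟩
  · show cubicLogistic c 0 • e ≠ 0
    rw [cubicLogistic_zero]
    exact smul_ne_zero (by norm_num) (norm_ne_zero_iff.mp (by simp [he]))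
  · rw [hF]
    exact (hasDerivAt_cubicLogistic c t).smul_const e
  · have hbound : ∀ᶠ t in atTop, ‖cubicLogistic c t • e‖ ^ 2 ≤ 1 / 4 :=
      (eventually_ge_atTop 0).mono fun t ht => hnorm t ▸ cubicLogistic_sq_le_of_nonpos hc ht
    have := le_of_tendsto hlim hbound
    norm_num at this

theorem bVF_smul_single (α₁ α₂ α₃ d₁ d₂ d₃ : ℝ) (i : Fin 3) (u : ℝ) :
    bVF α₁ α₂ α₃ d₁ d₂ d₃ (u • EuclideanSpace.single i 1) =
      (![α₁, α₂, α₃] i * u * (1 - u ^ 2)) • EuclideanSpace.single i 1 := by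
  ext j
  fin_cases i <;> fin_cases j <;> simp [bVF] <;> ring

/-- If `min αᵢ ≤ 0`, the unit sphere is not a global attractor in `ℝ³ \\ {0}`: there is
a solution starting at some `x₀ ≠ 0` whose squared norm does not tend to 1. -/
theorem sphere_not_global_attractor (α₁ α₂ α₃ d₁ d₂ d₃ : ℝ)
    (hα : min α₁ (min α₂ α₃) ≤ 0) :
    ∃ x : ℝ → EuclideanSpace ℝ (Fin 3), x 0 ≠ 0 ∧
      (∀ t : ℝ, 0 ≤ t → HasDerivAt x (bVF α₁ α₂ α₃ d₁ d₂ d₃ (x t)) t) ∧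
      ¬ Filter.Tendsto (fun t => ‖x t‖ ^ 2) Filter.atTop (nhds 1) := by
  obtain ⟨i, hi⟩ : ∃ i : Fin 3, ![α₁, α₂, α₃] i ≤ 0 := by
    rcases min_le_iff.mp hα with h | h
    · exact ⟨0, h⟩
    rcases min_le_iff.mp h with h | h
    · exact ⟨1, h⟩
    · exact ⟨2, h⟩
  exact exists_solution_not_tendsto_sq_norm_one _ hi (by simp)
    (bVF_smul_single α₁ α₂ α₃ d₁ d₂ d₃ i)
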